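/- arXiv:1609.04091 — 3 statements merged into one kernel-verified Lean document; each statement's English description precedes it below -/
import Mathlib

section
/- There is no Horn-box formula φ over any extension P' ⊇ {p} of the propositional alphabet such that for every Kripke model M over {p} and every world w, M,w ⊩ ◇_α p iff some extension of M to P' satisfies φ at w. In other words, ◇_α p is not model-conservatively rewritable into the Horn-box fragment. -/
/-- A Kripke model: accessibility relations indexed by `ι`, valuation over letters `P`. -/
structure KModel (ι P W : Type) where
  rel : ι → W → W → Prop
  val : W → P → Prop

/-- General positive literals: `⊤ | p | ◇_a λ | □_a λ`. -/
inductive PLit (ι P : Type) : Type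
  | top : PLit ι P
  | atom : P → PLit ι P
  | dia : ι → PLit ι P → PLit ι P
  | box : ι → PLit ι P → PLit ι P

/-- Positive box-literals: `⊤ | p | □_a λ`. -/
inductive BLit (ι P : Type) : Type
  | top : BLit ι P
  | atom : P → BLit ι P
  | box : ι → BLit ι P → BLit ι P

/-- Positive diamond-literals: `⊤ | p | ◇_a λ`. -/
inductive DLit (ι P : Type) : Type
  | top : DLit ι P
  | atom : P → DLit ι P
  | dia : ι → DLit ι P → DLit ι P

def PLit.sat {ι P W : Type} (M : KModel ι P W) : W → PLit ι P → Prop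
  | _, .top => True
  | w, .atom p => M.val w p
  | w, .dia a l => ∃ v, M.rel a w v ∧ PLit.sat M v l
  | w, .box a l => ∀ v, M.rel a w v → PLit.sat M v l

def BLit.sat {ι P W : Type} (M : KModel ι P W) : W → BLit ι P → Prop
  | _, .top => True
  | w, .atom p => M.val w p
  | w, .box a l => ∀ v, M.rel a w v → BLit.sat M v l

def DLit.sat {ι P W : Type} (M : KModel ι P W) : W → DLit ι P → Prop
  | _, .top => True
  | w, .atom p => M.val w p
  | w, .dia a l => ∃ v, M.rel a w v ∧ DLit.sat M v l

/-- Satisfaction of a property behind a prefix `∇` of universal modalities. -/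
def nablaSat {ι P W : Type} (M : KModel ι P W) : List ι → W → (W → Prop) → Prop
  | [], w, Φ => Φ w
  | a :: rest, w, Φ => ∀ v, M.rel a w v → nablaSat M rest v Φ

/-- A Horn clause `∇(λ₁ ∧ … ∧ λₙ → μ)` with general positive literals;
`concl = none` encodes the consequent `⊥`. -/
structure HornClause (ι P : Type) where
  nabla : List ι
  ante : List (PLit ι P)
  concl : Option (PLit ι P)

def HornClause.sat {ι P W : Type} (M : KModel ι P W) (w : W) (c : HornClause ι P) : Prop :=
  nablaSat M c.nabla w fun v =>
    (∀ l ∈ c.ante, PLit.sat M v l) → c.concl.elim False fun l => PLit.sat M v l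

def hornSat {ι P W : Type} (M : KModel ι P W) (w : W) (φ : List (HornClause ι P)) : Prop :=
  ∀ c ∈ φ, c.sat M w

/-- A Horn-box clause: positive literals use boxes only. -/
structure HornBoxClause (ι P : Type) where
  nabla : List ι
  ante : List (BLit ι P)
  concl : Option (BLit ι P)

def HornBoxClause.sat {ι P W : Type} (M : KModel ι P W) (w : W) (c : HornBoxClause ι P) : Prop :=
  nablaSat M c.nabla w fun v =>
    (∀ l ∈ c.ante, BLit.sat M v l) → c.concl.elim False fun l => BLit.sat M v l

def hornBoxSat {ι P W : Type} (M : KModel ι P W) (w : W) (φ : List (HornBoxClause ι P)) : Prop :=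
  ∀ c ∈ φ, c.sat M w

/-- A Horn-diamond clause: positive literals use diamonds only. -/
structure HornDiaClause (ι P : Type) where
  nabla : List ι
  ante : List (DLit ι P)
  concl : Option (DLit ι P)

def HornDiaClause.sat {ι P W : Type} (M : KModel ι P W) (w : W) (c : HornDiaClause ι P) : Prop :=
  nablaSat M c.nabla w fun v =>
    (∀ l ∈ c.ante, DLit.sat M v l) → c.concl.elim False fun l => DLit.sat M v l

def hornDiaSat {ι P W : Type} (M : KModel ι P W) (w : W) (φ : List (HornDiaClause ι P)) : Prop :=
  ∀ c ∈ φ, c.sat M w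

/-- A signed literal: a positive literal or its negation (`pos = false`). -/
structure SLit (ι P : Type) where
  pos : Bool
  lit : PLit ι P

def SLit.sat {ι P W : Type} (M : KModel ι P W) (w : W) (l : SLit ι P) : Prop :=
  if l.pos then PLit.sat M w l.lit else ¬ PLit.sat M w l.lit

/-- A Krom clause `∇(ℓ₁ ∨ ℓ₂)`; `l2 = none` encodes a unit clause. -/
structure KromClause (ι P : Type) where
  nabla : List ι
  l1 : SLit ι P
  l2 : Option (SLit ι P)

def KromClause.sat {ι P W : Type} (M : KModel ι P W) (w : W) (c : KromClause ι P) : Prop :=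
  nablaSat M c.nabla w fun v =>
    SLit.sat M v c.l1 ∨ c.l2.elim False fun l => SLit.sat M v l

def kromSat {ι P W : Type} (M : KModel ι P W) (w : W) (φ : List (KromClause ι P)) : Prop :=
  ∀ c ∈ φ, c.sat M w

/-- A signed box-literal. -/
structure SBLit (ι P : Type) where
  pos : Bool
  lit : BLit ι P

def SBLit.sat {ι P W : Type} (M : KModel ι P W) (w : W) (l : SBLit ι P) : Prop :=
  if l.pos then BLit.sat M w l.lit else ¬ BLit.sat M w l.lit

/-- A Krom-box clause. -/
structure KromBoxClause (ι P : Type) where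
  nabla : List ι
  l1 : SBLit ι P
  l2 : Option (SBLit ι P)

def KromBoxClause.sat {ι P W : Type} (M : KModel ι P W) (w : W) (c : KromBoxClause ι P) : Prop :=
  nablaSat M c.nabla w fun v =>
    SBLit.sat M v c.l1 ∨ c.l2.elim False fun l => SBLit.sat M v l

def kromBoxSat {ι P W : Type} (M : KModel ι P W) (w : W) (φ : List (KromBoxClause ι P)) : Prop :=
  ∀ c ∈ φ, c.sat M w

/-- A signed diamond-literal. -/
structure SDLit (ι P : Type) where
  pos : Bool
  lit : DLit ι P

def SDLit.sat {ι P W : Type} (M : KModel ι P W) (w : W) (l : SDLit ι P) : Prop :=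
  if l.pos then DLit.sat M w l.lit else ¬ DLit.sat M w l.lit

/-- A Krom-diamond clause. -/
structure KromDiaClause (ι P : Type) where
  nabla : List ι
  l1 : SDLit ι P
  l2 : Option (SDLit ι P)

def KromDiaClause.sat {ι P W : Type} (M : KModel ι P W) (w : W) (c : KromDiaClause ι P) : Prop :=
  nablaSat M c.nabla w fun v =>
    SDLit.sat M v c.l1 ∨ c.l2.elim False fun l => SDLit.sat M v l

def kromDiaSat {ι P W : Type} (M : KModel ι P W) (w : W) (φ : List (KromDiaClause ι P)) : Prop :=
  ∀ c ∈ φ, c.sat M w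

/-- Renaming of propositional letters in a positive literal. -/
def PLit.map {ι P Q : Type} (f : P → Q) : PLit ι P → PLit ι Q
  | .top => .top
  | .atom p => .atom (f p)
  | .dia a l => .dia a (PLit.map f l)
  | .box a l => .box a (PLit.map f l)

def SLit.map {ι P Q : Type} (f : P → Q) (l : SLit ι P) : SLit ι Q :=
  ⟨l.pos, l.lit.map f⟩

def KromClause.map {ι P Q : Type} (f : P → Q) (c : KromClause ι P) : KromClause ι Q :=
  ⟨c.nabla, c.l1.map f, c.l2.map (SLit.map f)⟩

/-- The letter `q` occurs in the positive literal. -/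
def PLit.occurs {ι P : Type} (q : P) : PLit ι P → Prop
  | .top => False
  | .atom r => r = q
  | .dia _ l => PLit.occurs q l
  | .box _ l => PLit.occurs q l

/-- A positive literal containing no propositional letters. -/
def PLit.letterFree {ι P : Type} : PLit ι P → Prop
  | .top => True
  | .atom _ => False
  | .dia _ l => PLit.letterFree l
  | .box _ l => PLit.letterFree l

/-- The letter `q` occurs in the Krom clause. -/
def KromClause.occurs {ι P : Type} (c : KromClause ι P) (q : P) : Prop :=
  PLit.occurs q c.l1.lit ∨ c.l2.elim False fun l => PLit.occurs q l.lit

/-!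
Horn-box formulas are preserved under intersection of valuations over a fixed frame:
box-literals are monotone in the valuation and commute with `⊓`, so both the antecedents and
the consequent of a clause transfer. Hence any property rewritable into the Horn-box fragment
is closed under intersecting the valuations of `p`. The diamond `◇_a p` is not: on the frame
`w₀ R_a w₁, w₀ R_a w₂`, making `p` true only at `w₁`, resp. only at `w₂`, satisfies `◇_a p`
at `w₀`, but their intersection does not.
-/

section HornBox

variable {ι P W : Type} {rel : ι → W → W → Prop}

lemma BLit.sat_mono {V V' : W → P → Prop} (h : V ≤ V') :
    ∀ {l : BLit ι P} {w : W}, BLit.sat ⟨rel, V⟩ w l → BLit.sat ⟨rel, V'⟩ w l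
  | .top, _, _ => trivial
  | .atom q, w, hs => h w q hs
  | .box _ _, _, hs => fun v hv => BLit.sat_mono h (hs v hv)

lemma BLit.sat_inf {V₁ V₂ : W → P → Prop} :
    ∀ {l : BLit ι P} {w : W},
      BLit.sat ⟨rel, V₁ ⊓ V₂⟩ w l ↔ BLit.sat ⟨rel, V₁⟩ w l ∧ BLit.sat ⟨rel, V₂⟩ w l
  | .top, _ => (and_self_iff (a := True)).symm
  | .atom _, _ => Iff.rfl
  | .box _ _, _ =>
      (forall_congr' fun _ => (imp_congr_right fun _ => BLit.sat_inf).trans imp_and).trans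
        forall_and

lemma nablaSat_mono {M : KModel ι P W} {Φ Ψ : W → Prop} (h : ∀ v, Φ v → Ψ v) :
    ∀ (n : List ι) (w : W), nablaSat M n w Φ → nablaSat M n w Ψ
  | [], w, hΦ => h w hΦ
  | _ :: rest, _, hΦ => fun v hv => nablaSat_mono h rest v (hΦ v hv)

lemma nablaSat_and {M : KModel ι P W} {Φ Ψ : W → Prop} :
    ∀ (n : List ι) (w : W),
      nablaSat M n w (fun v => Φ v ∧ Ψ v) ↔ nablaSat M n w Φ ∧ nablaSat M n w Ψ
  | [], _ => Iff.rfl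
  | _ :: rest, _ =>
      (forall_congr' fun v => (imp_congr_right fun _ => nablaSat_and rest v).trans imp_and).trans
        forall_and

lemma nablaSat_val_congr {Q : Type} {V : W → P → Prop} {V' : W → Q → Prop} {Φ : W → Prop} :
    ∀ (n : List ι) (w : W), nablaSat ⟨rel, V⟩ n w Φ ↔ nablaSat ⟨rel, V'⟩ n w Φ
  | [], _ => Iff.rfl
  | _ :: rest, _ => forall_congr' fun v => imp_congr_right fun _ => nablaSat_val_congr rest v

lemma HornBoxClause.sat_inf {V₁ V₂ : W → P → Prop} {w : W} {c : HornBoxClause ι P}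
    (h₁ : c.sat ⟨rel, V₁⟩ w) (h₂ : c.sat ⟨rel, V₂⟩ w) : c.sat ⟨rel, V₁ ⊓ V₂⟩ w := by
  unfold HornBoxClause.sat at *
  rw [nablaSat_val_congr (V' := V₁ ⊓ V₂)] at h₁ h₂
  refine nablaSat_mono ?_ c.nabla w ((nablaSat_and c.nabla w).2 ⟨h₁, h₂⟩)
  rintro v ⟨g₁, g₂⟩ hante
  have e₁ := g₁ fun l hl => BLit.sat_mono inf_le_left (hante l hl)
  have e₂ := g₂ fun l hl => BLit.sat_mono inf_le_right (hante l hl)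
  revert e₁ e₂
  cases c.concl with
  | none => exact fun e₁ _ => e₁
  | some l => exact fun e₁ e₂ => BLit.sat_inf.2 ⟨e₁, e₂⟩

lemma hornBoxSat_inf {V₁ V₂ : W → P → Prop} {w : W} {φ : List (HornBoxClause ι P)}
    (h₁ : hornBoxSat ⟨rel, V₁⟩ w φ) (h₂ : hornBoxSat ⟨rel, V₂⟩ w φ) :
    hornBoxSat ⟨rel, V₁ ⊓ V₂⟩ w φ :=
  fun c hc => HornBoxClause.sat_inf (h₁ c hc) (h₂ c hc)

lemma inf_closed_of_hornBox_rewritable {P' : Type} {p : P'} {φ : List (HornBoxClause ι P')}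
    {w : W} {Q : (W → Prop) → Prop}
    (h : ∀ V, Q V ↔ ∃ V' : W → P' → Prop, (∀ u, V' u p ↔ V u) ∧ hornBoxSat ⟨rel, V'⟩ w φ)
    {V₁ V₂ : W → Prop} (h₁ : Q V₁) (h₂ : Q V₂) : Q (V₁ ⊓ V₂) := by
  obtain ⟨V₁', hp₁, hs₁⟩ := (h V₁).1 h₁
  obtain ⟨V₂', hp₂, hs₂⟩ := (h V₂).1 h₂
  exact (h _).2 ⟨V₁' ⊓ V₂', fun u => and_congr (hp₁ u) (hp₂ u), hornBoxSat_inf hs₁ hs₂⟩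

end HornBox

/-- `◇_a p` is not model-conservatively rewritable into the
Horn-box fragment: there is no extended alphabet `P'` (with a letter `p`
playing the role of the original letter) and Horn-box formula `φ` over `P'`
such that, for every model over `{p}` and world `w`, `◇_a p` holds at `w`
iff some extension of the model to `P'` satisfies `φ` at `w`. -/
theorem dia_p_not_rewritable_hornBox (ι : Type) (a : ι) :
    ¬ ∃ (P' : Type) (p : P') (φ : List (HornBoxClause ι P')),
      ∀ (W : Type) (rel : ι → W → W → Prop) (V : W → Prop) (w : W),
        (∃ v, rel a w v ∧ V v) ↔
        ∃ V' : W → P' → Prop,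
          (∀ u, V' u p ↔ V u) ∧ hornBoxSat ⟨rel, V'⟩ w φ := by
  rintro ⟨P', p, φ, h⟩
  let rel : ι → Fin 3 → Fin 3 → Prop := fun i u v => i = a ∧ u = 0 ∧ v ≠ 0
  obtain ⟨v, -, hv₁, hv₂⟩ := inf_closed_of_hornBox_rewritable (h (Fin 3) rel · 0)
    (V₁ := (· = 1)) (V₂ := (· = 2)) ⟨1, ⟨rfl, rfl, by decide⟩, rfl⟩ ⟨2, ⟨rfl, rfl, by decide⟩, rfl⟩
  exact absurd (hv₁.symm.trans hv₂) (by decide)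
end

section
/- There is no Horn-diamond formula φ over any extension P' ⊇ {p, q} of the propositional alphabet such that for every Kripke model M over {p, q} and every world w, M,w ⊩ (□_α p → q) iff some extension of M to P' satisfies φ at w. In other words, □_α p → q is not model-conservatively rewritable into the Horn-diamond fragment. -/
/-!
Horn-diamond formulas are preserved under products of pointed models: a diamond-literal holds at a
pair of worlds iff it holds at both components, so a clause holds in the product once it holds in
both factors; moreover the product of two extensions to `P'` extends the product model. But
`□_a p → q` is not preserved: it holds at the root of the two-world model `w₀ R_a w₁` with empty
valuation (where `□_a p` fails) and at an isolated world where `q` is true, while their product is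
an isolated world where `q` fails.
-/

namespace KModel

variable {ι P W₁ W₂ : Type}

def prod (M₁ : KModel ι P W₁) (M₂ : KModel ι P W₂) : KModel ι P (W₁ × W₂) where
  rel b x y := M₁.rel b x.1 y.1 ∧ M₂.rel b x.2 y.2
  val x r := M₁.val x.1 r ∧ M₂.val x.2 r

end KModel

section Product

variable {ι P W₁ W₂ : Type} {M₁ : KModel ι P W₁} {M₂ : KModel ι P W₂}

theorem DLit.sat_prod_iff (l : DLit ι P) (x : W₁ × W₂) :
    DLit.sat (M₁.prod M₂) x l ↔ DLit.sat M₁ x.1 l ∧ DLit.sat M₂ x.2 l := by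
  induction l generalizing x with
  | top => simp [DLit.sat]
  | atom r => rfl
  | dia b l ih =>
    simp only [DLit.sat, ih]
    constructor
    · rintro ⟨v, ⟨hv₁, hv₂⟩, hs₁, hs₂⟩
      exact ⟨⟨v.1, hv₁, hs₁⟩, ⟨v.2, hv₂, hs₂⟩⟩
    · rintro ⟨⟨v₁, hv₁, hs₁⟩, ⟨v₂, hv₂, hs₂⟩⟩
      exact ⟨(v₁, v₂), ⟨hv₁, hv₂⟩, hs₁, hs₂⟩

theorem nablaSat_prod {Φ₁ : W₁ → Prop} {Φ₂ : W₂ → Prop} {Φ : W₁ × W₂ → Prop}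
    (hΦ : ∀ v₁ v₂, Φ₁ v₁ → Φ₂ v₂ → Φ (v₁, v₂)) :
    ∀ (n : List ι) (w₁ : W₁) (w₂ : W₂),
      nablaSat M₁ n w₁ Φ₁ → nablaSat M₂ n w₂ Φ₂ → nablaSat (M₁.prod M₂) n (w₁, w₂) Φ
  | [], _, _, h₁, h₂ => hΦ _ _ h₁ h₂
  | _ :: rest, _, _, h₁, h₂ => fun v hv =>
    nablaSat_prod hΦ rest v.1 v.2 (h₁ v.1 hv.1) (h₂ v.2 hv.2)

theorem HornDiaClause.sat_prod {c : HornDiaClause ι P} {w₁ : W₁} {w₂ : W₂}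
    (h₁ : c.sat M₁ w₁) (h₂ : c.sat M₂ w₂) : c.sat (M₁.prod M₂) (w₁, w₂) := by
  refine nablaSat_prod (fun v₁ v₂ hc₁ hc₂ hante => ?_) c.nabla w₁ w₂ h₁ h₂
  have hante' := fun l hl => (DLit.sat_prod_iff l (v₁, v₂)).mp (hante l hl)
  have hconcl₁ := hc₁ fun l hl => (hante' l hl).1
  have hconcl₂ := hc₂ fun l hl => (hante' l hl).2
  cases hcon : c.concl with
  | none => simp [hcon] at hconcl₁
  | some l =>
    simp only [hcon, Option.elim_some] at hconcl₁ hconcl₂ ⊢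
    exact (DLit.sat_prod_iff l (v₁, v₂)).mpr ⟨hconcl₁, hconcl₂⟩

theorem hornDiaSat_prod {φ : List (HornDiaClause ι P)} {w₁ : W₁} {w₂ : W₂}
    (h₁ : hornDiaSat M₁ w₁ φ) (h₂ : hornDiaSat M₂ w₂ φ) :
    hornDiaSat (M₁.prod M₂) (w₁, w₂) φ :=
  fun c hc => HornDiaClause.sat_prod (h₁ c hc) (h₂ c hc)

end Product

/-- `□_a p → q` is not model-conservatively rewritable into
the Horn-diamond fragment. The alphabet `{p, q}` is encoded as `Bool`
(`p = false`, `q = true`), embedded in an arbitrary extension `P'`. -/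
theorem box_imp_not_rewritable_hornDia (ι : Type) (a : ι) :
    ¬ ∃ (P' : Type) (i : Bool ↪ P') (φ : List (HornDiaClause ι P')),
      ∀ (W : Type) (rel : ι → W → W → Prop) (V : W → Bool → Prop) (w : W),
        ((∀ v, rel a w v → V v false) → V w true) ↔
        ∃ V' : W → P' → Prop,
          (∀ u b, V' u (i b) ↔ V u b) ∧ hornDiaSat ⟨rel, V'⟩ w φ := by
  rintro ⟨P', i, φ, H⟩
  let rel₁ : ι → Bool → Bool → Prop := fun _ x y => x = false ∧ y = true
  let V₁ : Bool → Bool → Prop := fun _ _ => False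
  obtain ⟨V₁', hext₁, hsat₁⟩ := (H Bool rel₁ V₁ false).mp fun h => h true ⟨rfl, rfl⟩
  let rel₂ : ι → Unit → Unit → Prop := fun _ _ _ => False
  let V₂ : Unit → Bool → Prop := fun _ b => b = true
  obtain ⟨V₂', hext₂, hsat₂⟩ := (H Unit rel₂ V₂ ()).mp fun _ => rfl
  let M : KModel ι P' (Bool × Unit) := KModel.prod ⟨rel₁, V₁'⟩ ⟨rel₂, V₂'⟩
  have hq := (H _ M.rel (fun x b => V₁ x.1 b ∧ V₂ x.2 b) (false, ())).mpr
    ⟨M.val, fun u b => and_congr (hext₁ u.1 b) (hext₂ u.2 b), hornDiaSat_prod hsat₁ hsat₂⟩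
  exact (hq fun _ hv => hv.2.elim).1
end

section
/- There is no Krom-box formula φ over the single-letter propositional alphabet {p} that is equivalent to ◇_α p: no conjunction of clauses ∇(ℓ₁ ∨ ℓ₂), where literals are positive box-literals or their negations, such that for every model M over {p} and world w, M,w ⊩ ◇_α p iff M,w ⊩ φ. -/
/-!
The root of the one-edge model `false → true`, with `p` true only at `true`, satisfies `◇_a p`;
an isolated world with `p` false does not. Yet both satisfy exactly the positive box-literals
other than `p` (every `□_b λ` holds at the root because `true` is a dead end satisfying `p`),
and an isolated world satisfies every clause with a nonempty box prefix vacuously. Hence every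
Krom-box formula true at the root is true at the isolated world.
-/

section

variable {ι P W W' : Type}

theorem nablaSat_cons_of_isolated {M : KModel ι P W} {w : W} (hw : ∀ b v, ¬ M.rel b w v)
    (b : ι) (rest : List ι) (Φ : W → Prop) : nablaSat M (b :: rest) w Φ :=
  fun v hv => (hw b v hv).elim

theorem BLit.sat_of_isolated {M : KModel ι P W} {w : W} (hw : ∀ b v, ¬ M.rel b w v)
    (hval : ∀ q, M.val w q) (l : BLit ι P) : BLit.sat M w l := by
  cases l with
  | top => trivial
  | atom q => exact hval q
  | box b l => exact fun v hv => (hw b v hv).elim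

theorem SBLit.sat_iff_of_blit_sat_iff {M : KModel ι P W} {M' : KModel ι P W'} {w : W} {w' : W'}
    (h : ∀ l, BLit.sat M w l ↔ BLit.sat M' w' l) (l : SBLit ι P) :
    SBLit.sat M w l ↔ SBLit.sat M' w' l := by
  unfold SBLit.sat
  split <;> simp only [h]

theorem KromBoxClause.sat_of_isolated_of_blit_sat_iff {M : KModel ι P W} {M' : KModel ι P W'}
    {w : W} {w' : W'} (hw' : ∀ b v, ¬ M'.rel b w' v) (h : ∀ l, BLit.sat M w l ↔ BLit.sat M' w' l)
    {c : KromBoxClause ι P} (hc : c.sat M w) : c.sat M' w' := by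
  unfold KromBoxClause.sat at hc ⊢
  rcases hnabla : c.nabla with _ | ⟨b, rest⟩
  · rw [hnabla] at hc
    rcases hc with h1 | h2
    · exact Or.inl ((SBLit.sat_iff_of_blit_sat_iff h c.l1).mp h1)
    · rcases hl2 : c.l2 with _ | l
      · simp [hl2] at h2
      · rw [hl2] at h2
        exact Or.inr ((SBLit.sat_iff_of_blit_sat_iff h l).mp h2)
  · exact nablaSat_cons_of_isolated hw' b rest _

theorem kromBoxSat_of_isolated_of_blit_sat_iff {M : KModel ι P W} {M' : KModel ι P W'}
    {w : W} {w' : W'} (hw' : ∀ b v, ¬ M'.rel b w' v) (h : ∀ l, BLit.sat M w l ↔ BLit.sat M' w' l)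
    {φ : List (KromBoxClause ι P)} (hφ : kromBoxSat M w φ) : kromBoxSat M' w' φ :=
  fun c hc => KromBoxClause.sat_of_isolated_of_blit_sat_iff hw' h (hφ c hc)

variable (ι P)

def pointModel : KModel ι P Unit := ⟨fun _ _ _ => False, fun _ _ => False⟩

def arrowModel : KModel ι P Bool := ⟨fun _ x y => x = false ∧ y = true, fun x _ => x = true⟩

variable {ι P}

theorem BLit.sat_arrowModel_false_iff (l : BLit ι P) :
    BLit.sat (arrowModel ι P) false l ↔ BLit.sat (pointModel ι P) () l := by
  have hdead : ∀ b v, ¬ (arrowModel ι P).rel b true v := fun _ _ hv => Bool.noConfusion hv.1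
  cases l with
  | top => exact Iff.rfl
  | atom q => simp [BLit.sat, arrowModel, pointModel]
  | box b l =>
    refine iff_of_true ?_ fun _ hv => hv.elim
    rintro v ⟨-, rfl⟩
    exact BLit.sat_of_isolated hdead (fun _ => rfl) l

end

/-- no Krom-box formula over the single-letter alphabet `{p}`
(encoded as `Unit`) is equivalent to `◇_a p`. -/
theorem no_kromBox_translation_of_dia_p (ι : Type) (a : ι) :
    ¬ ∃ φ : List (KromBoxClause ι Unit),
      ∀ (W : Type) (rel : ι → W → W → Prop) (V : W → Unit → Prop) (w : W),
        (∃ v, rel a w v ∧ V v ()) ↔ kromBoxSat ⟨rel, V⟩ w φ := by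
  rintro ⟨φ, hφ⟩
  have hroot : kromBoxSat (arrowModel ι Unit) false φ :=
    (hφ Bool _ _ false).mp ⟨true, ⟨rfl, rfl⟩, rfl⟩
  have hpoint : kromBoxSat (pointModel ι Unit) () φ :=
    kromBoxSat_of_isolated_of_blit_sat_iff (fun _ _ hv => hv) BLit.sat_arrowModel_false_iff hroot
  obtain ⟨_, hv, -⟩ := (hφ Unit _ _ ()).mpr hpoint
  exact hv
end
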